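/- For k ≥ 1 and n ≥ 2k + 3, the graph ̲Nᵏₙ = Kₖ ∨ (K_{n−2k−1} + (k+1)K₁) has diameter 2, is not traceable, and consequently W(̲Nᵏₙ) = n(n−1) − e(̲Nᵏₙ) and H(̲Nᵏₙ) = (e(̲Nᵏₙ) + C(n,2))/2, where e(̲Nᵏₙ) = C(n−k−1,2) + k(k+1). -/

import Mathlib

open SimpleGraph Finset

/-- The Wiener index: sum of distances over unordered pairs of vertices. -/
noncomputable def wienerIndex {V : Type*} [Fintype V] (G : SimpleGraph V) : ℝ :=
  (∑ u : V, ∑ v : V, (G.dist u v : ℝ)) / 2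

/-- The Harary index: sum of reciprocal distances over unordered pairs of vertices. -/
noncomputable def hararyIndex {V : Type*} [Fintype V] (G : SimpleGraph V) : ℝ :=
  (∑ u : V, ∑ v : V, ((G.dist u v : ℝ))⁻¹) / 2

/-- The number of edges of a graph. -/
noncomputable def numEdges {V : Type*} (G : SimpleGraph V) : ℕ := Nat.card G.edgeSet

/-- A graph is traceable if it has a Hamiltonian path. -/
def IsTraceable {V : Type*} [DecidableEq V] (G : SimpleGraph V) : Prop :=
  ∃ (u v : V) (p : G.Walk u v), p.IsHamiltonian

/-- The join `G ∨ H` of two graphs: disjoint union plus all edges in between. -/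
def gJoin {α β : Type*} (G : SimpleGraph α) (H : SimpleGraph β) : SimpleGraph (α ⊕ β) :=
  (G ⊕g H) ⊔ completeBipartiteGraph α β

/-- `N^k_n = K_k ∨ (K_{n-2k} + k K_1)`. -/
def graphN (n k : ℕ) : SimpleGraph (Fin k ⊕ (Fin (n - 2*k) ⊕ Fin k)) :=
  gJoin (⊤ : SimpleGraph (Fin k)) ((⊤ : SimpleGraph (Fin (n - 2*k))) ⊕g (⊥ : SimpleGraph (Fin k)))

/-- `L^k_n = K_1 ∨ (K_k + K_{n-k-1})`. -/
def graphL (n k : ℕ) : SimpleGraph (Fin 1 ⊕ (Fin k ⊕ Fin (n - k - 1))) :=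
  gJoin (⊤ : SimpleGraph (Fin 1)) ((⊤ : SimpleGraph (Fin k)) ⊕g (⊤ : SimpleGraph (Fin (n - k - 1))))

/-- `N̲^k_n = K_k ∨ (K_{n-2k-1} + (k+1) K_1)`. -/
def graphNbar (n k : ℕ) : SimpleGraph (Fin k ⊕ (Fin (n - 2*k - 1) ⊕ Fin (k + 1))) :=
  gJoin (⊤ : SimpleGraph (Fin k))
    ((⊤ : SimpleGraph (Fin (n - 2*k - 1))) ⊕g (⊥ : SimpleGraph (Fin (k + 1))))

/-- `L̲^k_n = K_{k+1} + K_{n-k-1}`. -/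
def graphLbar (n k : ℕ) : SimpleGraph (Fin (k + 1) ⊕ Fin (n - k - 1)) :=
  (⊤ : SimpleGraph (Fin (k + 1))) ⊕g (⊤ : SimpleGraph (Fin (n - k - 1)))

/-- `B^k_n`: obtained from `K_{n,n}` by deleting the edges of a complete bipartite
subgraph `K_{n-k,k}` (between the first `n-k` left vertices and first `k` right vertices). -/
def graphB (n k : ℕ) : SimpleGraph (Fin n ⊕ Fin n) where
  Adj x y := match x, y with
    | Sum.inl i, Sum.inr j => ¬(i.val < n - k ∧ j.val < k)
    | Sum.inr j, Sum.inl i => ¬(i.val < n - k ∧ j.val < k)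
    | _, _ => False
  symm := ⟨by rintro (i | i) (j | j) h <;> simp_all⟩
  loopless := ⟨by rintro (i | i) h <;> simp_all⟩

/-!
Every vertex of `Kₖ` is adjacent to all others, so any two distinct vertices are at distance 1
or 2 according as they are adjacent or not; summing `d = 2 - [adjacent]` and
`1 / d = (1 + [adjacent]) / 2` over ordered pairs gives both indices.

The `k + 1` independent vertices have all their neighbours in `Kₖ`. On a Hamiltonian path, send
each of them to its successor if it comes before a fixed vertex `w` of `K_{n-2k-1}` and to its
predecessor otherwise: this injects them into `Kₖ`, which is impossible.
-/

lemma Nat.add_choose_two (a b : ℕ) : (a + b).choose 2 = a.choose 2 + b.choose 2 + a * b := by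
  apply Nat.cast_injective (R := ℚ)
  push_cast [Nat.cast_choose_two]
  ring

namespace SimpleGraph

variable {V : Type*} {G : SimpleGraph V}

lemma ediam_le_two_of_forall_adj {u : V} (hu : ∀ v, u ≠ v → G.Adj u v) : G.ediam ≤ 2 :=
  calc G.ediam ≤ 2 * G.eccent u := G.ediam_le_two_mul_eccent u
    _ ≤ 2 * 1 := by gcongr; exact (G.eccent_le_one_iff u).2 hu
    _ = 2 := mul_one 2

lemma ediam_eq_two_of_forall_adj {u : V} (hu : ∀ v, u ≠ v → G.Adj u v) (hG : G ≠ ⊤) :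
    G.ediam = 2 := by
  have : Nontrivial V := by
    by_contra h
    rw [not_nontrivial_iff_subsingleton] at h
    exact hG (Subsingleton.elim _ _)
  have h0 : G.ediam ≠ 0 := ediam_ne_zero
  have h1 : G.ediam ≠ 1 := fun h => hG (ediam_eq_one.1 h)
  have h2 := ediam_le_two_of_forall_adj hu
  lift G.ediam to ℕ using ne_top_of_le_ne_top (by decide) h2 with d
  norm_cast at h0 h1 h2 ⊢
  omega

lemma dist_eq_of_ediam_le_two [DecidableEq V] [DecidableRel G.Adj] (h : G.ediam ≤ 2) (u v : V) :
    G.dist u v = if u = v then 0 else if G.Adj u v then 1 else 2 := by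
  split_ifs with huv hadj
  · simp [huv]
  · exact dist_eq_one_iff_adj.2 hadj
  · have hreach : G.Reachable u v :=
      preconnected_of_ediam_ne_top (ne_top_of_le_ne_top (by decide) h) u v
    have h0 : G.dist u v ≠ 0 := dist_ne_zero_iff_ne_and_reachable.2 ⟨huv, hreach⟩
    have h1 : G.dist u v ≠ 1 := fun h => hadj (dist_eq_one_iff_adj.1 h)
    have h2 : G.dist u v ≤ 2 := by
      have := (edist_le_ediam (G := G) (u := u) (v := v)).trans h
      rw [← hreach.coe_dist_eq_edist] at this
      exact_mod_cast this
    omega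

end SimpleGraph

section Indices

variable {V : Type*} [Fintype V] (G : SimpleGraph V)

lemma numEdges_eq_card_edgeFinset [DecidableRel G.Adj] : numEdges G = #G.edgeFinset := by
  rw [numEdges, Nat.card_eq_fintype_card, edgeFinset_card]

lemma sum_sum_adj_boole {R : Type*} [NonAssocSemiring R] [DecidableRel G.Adj] :
    ∑ u, ∑ v, (if G.Adj u v then 1 else 0 : R) = 2 * numEdges G := by
  classical
  have hdeg (u : V) : ∑ v, (if G.Adj u v then 1 else 0 : R) = G.degree u := by
    rw [sum_boole, ← card_neighborFinset_eq_degree, neighborFinset_eq_filter]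
  simp_rw [hdeg, ← Nat.cast_sum, sum_degrees_eq_twice_card_edges, numEdges_eq_card_edgeFinset,
    Nat.cast_mul, Nat.cast_ofNat]

variable {G}

lemma wienerIndex_of_ediam_le_two (h : G.ediam ≤ 2) :
    wienerIndex G = (Fintype.card V : ℝ) * ((Fintype.card V : ℝ) - 1) - (numEdges G : ℝ) := by
  classical
  have hdist (u v : V) : (G.dist u v : ℝ) =
      2 - 2 * (if u = v then 1 else 0) - (if G.Adj u v then 1 else 0) := by
    obtain rfl | huv := eq_or_ne u v
    · simp
    · rw [dist_eq_of_ediam_le_two h, if_neg huv, if_neg huv]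
      split_ifs <;> norm_num
  simp only [wienerIndex, hdist, sum_sub_distrib, ← mul_sum, sum_ite_eq, mem_univ, if_true,
    sum_const, card_univ, nsmul_eq_mul, mul_one, sum_sum_adj_boole]
  ring

lemma hararyIndex_of_ediam_le_two (h : G.ediam ≤ 2) :
    hararyIndex G =
      ((numEdges G : ℝ) + (Fintype.card V : ℝ) * ((Fintype.card V : ℝ) - 1) / 2) / 2 := by
  classical
  have hdist (u v : V) : ((G.dist u v : ℝ))⁻¹ =
      1 / 2 - 1 / 2 * (if u = v then 1 else 0) + 1 / 2 * (if G.Adj u v then 1 else 0) := by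
    obtain rfl | huv := eq_or_ne u v
    · simp
    · rw [dist_eq_of_ediam_le_two h, if_neg huv, if_neg huv]
      split_ifs <;> norm_num
  simp only [hararyIndex, hdist, sum_add_distrib, sum_sub_distrib, ← mul_sum, sum_ite_eq,
    mem_univ, if_true, sum_const, card_univ, nsmul_eq_mul, mul_one, sum_sum_adj_boole]
  ring

end Indices

lemma card_filter_range_le_of_succ_pred {N r : ℕ} {P Q : ℕ → Prop} [DecidablePred P]
    [DecidablePred Q] (hr : r < N) (hPr : ¬ P r) (hQr : ¬ Q r)
    (hsucc : ∀ i, i + 1 < N → P i → Q (i + 1))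
    (hpred : ∀ i, i + 1 < N → P (i + 1) → Q i) :
    #((range N).filter P) ≤ #((range N).filter Q) := by
  set φ : ℕ → ℕ := fun i => if i < r then i + 1 else i - 1
  have hne {i : ℕ} (hi : P i) : i ≠ r := fun h => hPr (h ▸ hi)
  have hmaps : Set.MapsTo φ ((range N).filter P) ((range N).filter Q) := by
    intro i hi
    simp only [coe_filter, mem_range, Set.mem_ofPred_eq, φ] at hi ⊢
    split_ifs with hir
    · exact ⟨by omega, hsucc i (by omega) hi.2⟩
    · have hi' : i - 1 + 1 = i := by have := hne hi.2; omega
      exact ⟨by omega, hpred (i - 1) (by omega) (hi' ▸ hi.2)⟩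
  refine card_le_card_of_injOn φ hmaps fun i hi j hj hij => ?_
  have hφi : φ i ≠ r := fun h => hQr (h ▸ (mem_filter.1 (hmaps hi)).2)
  have := hne (mem_filter.1 hi).2
  have := hne (mem_filter.1 hj).2
  simp only [φ] at hij hφi
  split_ifs at hij hφi <;> omega

lemma IsTraceable.card_le_card_of_forall_adj_mem {V : Type*} [DecidableEq V]
    {G : SimpleGraph V} (hG : IsTraceable G) {I S : Finset V}
    (hIS : ∀ x ∈ I, ∀ y, G.Adj x y → y ∈ S) {w : V} (hwI : w ∉ I) (hwS : w ∉ S) :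
    #I ≤ #S := by
  obtain ⟨a, b, p, hp⟩ := hG
  set N := p.support.length
  have hN : N = p.length + 1 := p.length_support
  have hcount (T : Finset V) : #((range N).filter (fun i => p.getVert i ∈ T)) = #T := by
    refine card_nbij p.getVert (fun i hi => (mem_filter.1 hi).2) ?_ ?_
    · intro i hi j hj hij
      have := hp.getVertEquiv.injective (a₁ := ⟨i, mem_range.1 (mem_filter.1 hi).1⟩)
        (a₂ := ⟨j, mem_range.1 (mem_filter.1 hj).1⟩) hij
      simpa using this
    · intro x hx
      obtain ⟨i, rfl⟩ := hp.getVertEquiv.surjective x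
      exact ⟨i, mem_filter.2 ⟨mem_range.2 i.2, hx⟩, rfl⟩
  obtain ⟨r, rfl⟩ := hp.getVertEquiv.surjective w
  rw [← hcount I, ← hcount S]
  exact card_filter_range_le_of_succ_pred r.2 hwI hwS
    (fun i hi hI => hIS _ hI _ (p.adj_getVert_succ (by omega)))
    (fun i hi hI => hIS _ hI _ (p.adj_getVert_succ (by omega)).symm)

section Join

variable {α β γ : Type*} {G : SimpleGraph α} {H : SimpleGraph β}

@[simp] lemma gJoin_adj_inl_inl {a a' : α} :
    (gJoin G H).Adj (.inl a) (.inl a') ↔ G.Adj a a' := by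
  simp [gJoin]

@[simp] lemma gJoin_adj_inr_inr {b b' : β} :
    (gJoin G H).Adj (.inr b) (.inr b') ↔ H.Adj b b' := by
  simp [gJoin]

@[simp] lemma gJoin_adj_inl_inr {a : α} {b : β} : (gJoin G H).Adj (.inl a) (.inr b) := by
  simp [gJoin]

@[simp] lemma gJoin_adj_inr_inl {a : α} {b : β} : (gJoin G H).Adj (.inr b) (.inl a) := by
  simp [gJoin]

lemma sum_bot_ne_top [Nontrivial γ] : H ⊕g (⊥ : SimpleGraph γ) ≠ ⊤ := by
  obtain ⟨c, c', hcc'⟩ := exists_pair_ne γ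
  intro h
  have : (H ⊕g (⊥ : SimpleGraph γ)).Adj (.inr c) (.inr c') := by simpa [h] using hcc'
  simp at this

lemma ediam_gJoin_top [Nonempty α] (hH : H ≠ ⊤) :
    (gJoin (⊤ : SimpleGraph α) H).ediam = 2 := by
  obtain ⟨a⟩ := ‹Nonempty α›
  refine ediam_eq_two_of_forall_adj (u := .inl a) ?_ ?_
  · rintro (a' | b) h <;> simp_all
  · intro h
    apply hH
    ext b b'
    rw [← gJoin_adj_inr_inr (G := (⊤ : SimpleGraph α)), h]
    simp

lemma numEdges_bot : numEdges (⊥ : SimpleGraph α) = 0 := by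
  simp [numEdges]

lemma numEdges_top [Fintype α] [DecidableEq α] :
    numEdges (⊤ : SimpleGraph α) = (Fintype.card α).choose 2 := by
  rw [numEdges_eq_card_edgeFinset, card_edgeFinset_top_eq_card_choose_two]

lemma numEdges_sum [Fintype α] [Fintype β] : numEdges (G ⊕g H) = numEdges G + numEdges H := by
  rw [numEdges, Nat.card_congr edgeSetSumEquiv, Nat.card_sum, numEdges, numEdges]

lemma numEdges_gJoin [Fintype α] [Fintype β] :
    numEdges (gJoin G H) = numEdges G + numEdges H + Fintype.card α * Fintype.card β := by
  classical
  have h := sum_sum_adj_boole (R := ℕ) (gJoin G H)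
  simp only [Fintype.sum_sum_type, gJoin_adj_inl_inl, gJoin_adj_inr_inr, gJoin_adj_inl_inr,
    gJoin_adj_inr_inl, if_true, sum_add_distrib, sum_sum_adj_boole, sum_const, card_univ,
    smul_eq_mul, mul_one, Nat.cast_id] at h
  linarith

lemma not_isTraceable_gJoin_sum_bot [Fintype α] [Fintype γ] [DecidableEq α] [DecidableEq β]
    [DecidableEq γ] [Nonempty β] (hcard : Fintype.card α < Fintype.card γ) :
    ¬ IsTraceable (gJoin G (H ⊕g (⊥ : SimpleGraph γ))) := by
  intro hG
  obtain ⟨b⟩ := ‹Nonempty β›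
  have := hG.card_le_card_of_forall_adj_mem
    (I := univ.map (Function.Embedding.inr.trans Function.Embedding.inr))
    (S := univ.map Function.Embedding.inl) (w := .inr (.inl b)) (by simp) (by simp) (by simp)
  simp only [card_map, card_univ] at this
  omega

end Join

/-- For `k ≥ 1` and `n ≥ 2k + 3`, the graph
`N̲ᵏₙ = Kₖ ∨ (K_{n-2k-1} + (k+1)K₁)` has diameter `2`, is not traceable, and
`W(N̲ᵏₙ) = n(n-1) - e(N̲ᵏₙ)`, `H(N̲ᵏₙ) = (e(N̲ᵏₙ) + C(n,2))/2`, where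
`e(N̲ᵏₙ) = C(n-k-1,2) + k(k+1)`. -/
theorem graphNbar_properties {n k : ℕ} (hk : 1 ≤ k) (hn : 2 * k + 3 ≤ n) :
    (graphNbar n k).diam = 2 ∧
    ¬ IsTraceable (graphNbar n k) ∧
    wienerIndex (graphNbar n k) = (n : ℝ) * ((n : ℝ) - 1) - (numEdges (graphNbar n k) : ℝ) ∧
    hararyIndex (graphNbar n k) =
      ((numEdges (graphNbar n k) : ℝ) + (n : ℝ) * ((n : ℝ) - 1) / 2) / 2 ∧
    numEdges (graphNbar n k) = Nat.choose (n - k - 1) 2 + k * (k + 1) := by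
  have hcard : Fintype.card (Fin k ⊕ (Fin (n - 2 * k - 1) ⊕ Fin (k + 1))) = n := by
    simp only [Fintype.card_sum, Fintype.card_fin]
    omega
  have : Nonempty (Fin k) := ⟨⟨0, hk⟩⟩
  have : Nonempty (Fin (n - 2 * k - 1)) := ⟨⟨0, by omega⟩⟩
  have : Nontrivial (Fin (k + 1)) := Fin.nontrivial_iff_two_le.2 (by omega)
  have hediam : (graphNbar n k).ediam = 2 := ediam_gJoin_top sum_bot_ne_top
  refine ⟨by rw [diam, hediam]; rfl, not_isTraceable_gJoin_sum_bot (by simp),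
    by rw [wienerIndex_of_ediam_le_two hediam.le, hcard],
    by rw [hararyIndex_of_ediam_le_two hediam.le, hcard], ?_⟩
  rw [graphNbar, numEdges_gJoin, numEdges_sum, numEdges_top, numEdges_top, numEdges_bot,
    show n - k - 1 = (n - 2 * k - 1) + k by omega, Nat.add_choose_two]
  simp only [Fintype.card_sum, Fintype.card_fin]
  ring
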